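/- arXiv:2504.01878 — 2 statements merged into one kernel-verified Lean document; each statement's English description precedes it below -/
import Mathlib

section
/- If ẑ is a real root of h, then h is differentiable at ẑ and h′(ẑ) = −d + (1 − d²·ẑ²)·ψ′(ẑ) = −D(ẑ), where D(z) = −5·c₃·z⁶ + (c₂ + 4·a·kₛ)·z⁴ − c₁·z² − c₀. -/
/-! At a root `ẑ` of `h` we have `tanh (ψ ẑ) = d ẑ`, so the chain-rule factor
`tanh' (ψ ẑ) = 1 - tanh (ψ ẑ) ^ 2` becomes the polynomial `1 - d² ẑ²`; multiplying it out against
`ψ'(ẑ) = a μ₀ + 3 a k ẑ² - 5 a kₛ ẑ⁴` gives `-D(ẑ)`. -/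

open Real

theorem Real.hasDerivAt_tanh (x : ℝ) : HasDerivAt tanh (1 - tanh x ^ 2) x := by
  have hcosh : cosh x ≠ 0 := (cosh_pos x).ne'
  have hquot := (hasDerivAt_sinh x).div (hasDerivAt_cosh x) hcosh
  rw [show sinh / cosh = tanh from funext fun y => (tanh_eq_sinh_div_cosh y).symm] at hquot
  refine hquot.congr_deriv ?_
  rw [tanh_eq_sinh_div_cosh]
  have := cosh_sq_sub_sinh_sq x
  field_simp

theorem HasDerivAt.tanh {f : ℝ → ℝ} {f' x : ℝ} (hf : HasDerivAt f f' x) :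
    HasDerivAt (fun y => Real.tanh (f y)) ((1 - Real.tanh (f x) ^ 2) * f') x :=
  (Real.hasDerivAt_tanh (f x)).comp x hf

theorem hasDerivAt_neg_mul_add_tanh_of_eq_zero {f : ℝ → ℝ} {f' d z : ℝ}
    (hf : HasDerivAt f f' z) (hroot : -d * z + Real.tanh (f z) = 0) :
    HasDerivAt (fun y => -d * y + Real.tanh (f y)) (-d + (1 - d ^ 2 * z ^ 2) * f') z := by
  have htanh : Real.tanh (f z) = d * z := by linarith
  have hsum := ((hasDerivAt_id z).const_mul (-d)).add hf.tanh
  rw [htanh] at hsum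
  exact hsum.congr_deriv (by ring)

theorem hasDerivAt_mul_biquadratic_add_const (a k ks μ0 b z : ℝ) :
    HasDerivAt (fun z => a * z * (-ks * z ^ 4 + k * z ^ 2 + μ0) + b)
      (a * μ0 + 3 * a * k * z ^ 2 - 5 * a * ks * z ^ 4) z := by
  have hpoly := (((hasDerivAt_id z).const_mul a).mul
    ((((hasDerivAt_pow 4 z).const_mul (-ks)).add
      ((hasDerivAt_pow 2 z).const_mul k)).add_const μ0)).add_const b
  simp only [id, Pi.add_apply, Pi.mul_apply] at hpoly
  refine hpoly.congr_deriv ?_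
  norm_num
  ring

theorem snod_h_deriv_at_root_general
    (a d k ks μ0 b : ℝ)
    (c3 c2 c1 c0 : ℝ)
    (hc3 : c3 = a * d ^ 2 * ks) (hc2 : c2 = 3 * a * d ^ 2 * k + a * ks)
    (hc1 : c1 = 3 * a * k - a * d ^ 2 * μ0) (hc0 : c0 = a * μ0 - d)
    (ψ h : ℝ → ℝ)
    (hψ : ψ = fun z => a * z * (-ks * z ^ 4 + k * z ^ 2 + μ0) + b)
    (hh : h = fun z => -d * z + Real.tanh (ψ z))
    (zhat : ℝ) (hroot : h zhat = 0) :
    DifferentiableAt ℝ h zhat ∧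
      deriv h zhat = -d + (1 - d ^ 2 * zhat ^ 2) * deriv ψ zhat ∧
      deriv h zhat =
        -(-5 * c3 * zhat ^ 6 + (c2 + 4 * a * ks) * zhat ^ 4 - c1 * zhat ^ 2 - c0) := by
  have hψ' : HasDerivAt ψ (a * μ0 + 3 * a * k * zhat ^ 2 - 5 * a * ks * zhat ^ 4) zhat :=
    hψ ▸ hasDerivAt_mul_biquadratic_add_const a k ks μ0 b zhat
  have hh' := hasDerivAt_neg_mul_add_tanh_of_eq_zero hψ' (by simpa [hh] using hroot)
  rw [← hh] at hh'
  refine ⟨hh'.differentiableAt, by rw [hh'.deriv, hψ'.deriv], ?_⟩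
  rw [hh'.deriv, hc3, hc2, hc1, hc0]
  ring

/-- If `ẑ` is a real root of
`h(z) = −d·z + tanh(ψ(z))` with `ψ(z) = a·z·(−kₛ·z⁴ + k·z² + μ₀) + b`,
then `h` is differentiable at `ẑ` and
`h′(ẑ) = −d + (1 − d²·ẑ²)·ψ′(ẑ) = −D(ẑ)`, where
`D(z) = −5·c₃·z⁶ + (c₂ + 4·a·kₛ)·z⁴ − c₁·z² − c₀`. -/
theorem snod_h_deriv_at_root
    (a d k ks ε μ0 b : ℝ)
    (ha : 0 < a) (hd : 0 < d) (hk : 0 < k) (hks : 0 < ks) (hε : 0 < ε) (hμ0 : 0 < μ0)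
    (c3 c2 c1 c0 : ℝ)
    (hc3 : c3 = a * d ^ 2 * ks) (hc2 : c2 = 3 * a * d ^ 2 * k + a * ks)
    (hc1 : c1 = 3 * a * k - a * d ^ 2 * μ0) (hc0 : c0 = a * μ0 - d)
    (ψ h : ℝ → ℝ)
    (hψ : ψ = fun z => a * z * (-ks * z ^ 4 + k * z ^ 2 + μ0) + b)
    (hh : h = fun z => -d * z + Real.tanh (ψ z))
    (zhat : ℝ) (hroot : h zhat = 0) :
    DifferentiableAt ℝ h zhat ∧
      deriv h zhat = -d + (1 - d ^ 2 * zhat ^ 2) * deriv ψ zhat ∧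
      deriv h zhat =
        -(-5 * c3 * zhat ^ 6 + (c2 + 4 * a * ks) * zhat ^ 4 - c1 * zhat ^ 2 - c0) :=
  snod_h_deriv_at_root_general a d k ks μ0 b c3 c2 c1 c0 hc3 hc2 hc1 hc0 ψ h hψ hh zhat hroot
end

section
/- Assume ζ₀ ∈ ℝ₊ and D(√ζ₀) > 0, and for each b ∈ ℝ let ẑ_b denote the unique real root of h with input b. Then the map b ↦ ẑ_b is strictly increasing: for all b, b′ ∈ ℝ with b < b′ one has ẑ_b < ẑ_{b′}. -/
lemma my_tanh_formula (x : ℝ) : Real.tanh x = 1 - 2 / (Real.exp (2*x) + 1) := by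
  have h1 : (0:ℝ) < Real.exp x := Real.exp_pos x
  have h3 : Real.exp (2*x) = Real.exp x * Real.exp x := by rw [two_mul, Real.exp_add]
  have h4 : Real.exp (-x) = 1 / Real.exp x := by rw [Real.exp_neg]; ring
  have hc : (0:ℝ) < Real.cosh x := Real.cosh_pos x
  rw [Real.tanh_eq_sinh_div_cosh, Real.sinh_eq, Real.cosh_eq, h4, h3]
  have he1 : Real.exp x * Real.exp x + 1 > 0 := by positivity
  field_simp
  ring

lemma my_tanh_strictMono : StrictMono Real.tanh := by
  intro x y hxy
  rw [my_tanh_formula, my_tanh_formula]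
  have h : Real.exp (2*x) < Real.exp (2*y) := Real.exp_lt_exp.2 (by linarith)
  have h1 : (0:ℝ) < Real.exp (2*x) + 1 := by positivity
  have h2 : 2 / (Real.exp (2*y) + 1) < 2 / (Real.exp (2*x) + 1) :=
    div_lt_div_of_pos_left (by norm_num) h1 (by linarith)
  linarith

lemma my_tanh_le_one (x : ℝ) : Real.tanh x ≤ 1 := by
  rw [my_tanh_formula]
  have : (0:ℝ) < 2 / (Real.exp (2*x) + 1) := by positivity
  linarith



/-- Assume `ζ₀ ∈ ℝ₊` and `D(√ζ₀) > 0`, and for each `b ∈ ℝ` let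
`ẑ_b` denote the unique real root of `h` with input `b`. Then the map `b ↦ ẑ_b`
is strictly increasing: for all `b < b′` one has `ẑ_b < ẑ_{b′}`. -/
theorem snod_root_strictMono
    (a d k ks ε μ0 : ℝ)
    (ha : 0 < a) (hd : 0 < d) (hk : 0 < k) (hks : 0 < ks) (hε : 0 < ε) (hμ0 : 0 < μ0)
    (c3 c2 c1 c0 : ℝ)
    (hc3 : c3 = a * d ^ 2 * ks) (hc2 : c2 = 3 * a * d ^ 2 * k + a * ks)
    (hc1 : c1 = 3 * a * k - a * d ^ 2 * μ0) (hc0 : c0 = a * μ0 - d)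
    (D : ℝ → ℝ)
    (hD : D = fun z => -5 * c3 * z ^ 6 + (c2 + 4 * a * ks) * z ^ 4 - c1 * z ^ 2 - c0)
    (ζ0 : ℝ)
    (hζ0 : ζ0 = ((c2 + 4 * a * ks) -
      Real.sqrt ((c2 + 4 * a * ks) ^ 2 - 15 * c1 * c3)) / (15 * c3))
    (hdisc : (c2 + 4 * a * ks) ^ 2 - 15 * c1 * c3 ≥ 0)
    (hζ0pos : 0 < ζ0)
    (hDζ0 : 0 < D (Real.sqrt ζ0))
    (zb : ℝ → ℝ)
    (hroot : ∀ b : ℝ,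
      -d * zb b + Real.tanh (a * zb b * (-ks * zb b ^ 4 + k * zb b ^ 2 + μ0) + b) = 0)
    (huniq : ∀ b z : ℝ,
      -d * z + Real.tanh (a * z * (-ks * z ^ 4 + k * z ^ 2 + μ0) + b) = 0 → z = zb b) :
    ∀ b b' : ℝ, b < b' → zb b < zb b' := by
  intro b b' hbb'
  by_contra hle
  push_neg at hle
  -- f is h with input b'
  set f : ℝ → ℝ := fun z =>
    -d * z + Real.tanh (a * z * (-ks * z ^ 4 + k * z ^ 2 + μ0) + b') with hf
  have htanhc : Continuous Real.tanh := by
    have h : Real.tanh = fun x => Real.sinh x / Real.cosh x :=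
      funext Real.tanh_eq_sinh_div_cosh
    rw [h]
    exact Real.continuous_sinh.div Real.continuous_cosh fun x => (Real.cosh_pos x).ne'
  have hcont : Continuous f := by
    apply Continuous.add
    · exact (continuous_const.mul continuous_id)
    · exact htanhc.comp (by fun_prop)
  set z0 := zb b with hz0
  have hfz0 : 0 < f z0 := by
    have h0 := hroot b
    have htanh : Real.tanh (a * z0 * (-ks * z0 ^ 4 + k * z0 ^ 2 + μ0) + b)
        < Real.tanh (a * z0 * (-ks * z0 ^ 4 + k * z0 ^ 2 + μ0) + b') :=
      my_tanh_strictMono (by linarith)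
    simp only [hf]
    linarith
  -- zb b' ≤ z0, and zb b' ≠ z0 since f z0 > 0 but f (zb b') = 0
  have hfzb' : f (zb b') = 0 := hroot b'
  have hlt : zb b' < z0 := by
    rcases lt_or_eq_of_le hle with h | h
    · exact h
    · exfalso; rw [← h] at hfz0; rw [hfzb'] at hfz0; exact lt_irrefl 0 hfz0
  -- find a point to the right where f < 0
  set z2 := max (z0 + 1) (2 / d) with hz2
  have hz2gt : z0 < z2 := lt_of_lt_of_le (by linarith) (le_max_left _ _)
  have hz2d : 2 / d ≤ z2 := le_max_right _ _
  have hfz2 : f z2 < 0 := by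
    have h1 : Real.tanh (a * z2 * (-ks * z2 ^ 4 + k * z2 ^ 2 + μ0) + b') ≤ 1 :=
      my_tanh_le_one _
    have h2 : 2 ≤ d * z2 := by
      have := (div_le_iff₀ hd).mp hz2d
      linarith
    simp only [hf]
    linarith
  -- IVT on [z0, z2]
  have hmem : (0:ℝ) ∈ Set.Icc (f z2) (f z0) := ⟨le_of_lt hfz2, le_of_lt hfz0⟩
  obtain ⟨c, hc, hfc⟩ := intermediate_value_Icc' (le_of_lt hz2gt) hcont.continuousOn hmem
  have hceq : c = zb b' := huniq b' c hfc
  have : z0 ≤ c := hc.1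
  linarith
end
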